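/- arXiv:gr-qc/9711042 — 2 statements merged into one kernel-verified Lean document; each statement's English description precedes it below -/
import Mathlib

section
/- Let M be a smooth n-manifold, f : M → ℝ a smooth function, G a Riemannian metric on M, and ζ > 1 a real number. Define g_{μν} = (∂_ρ f ∂_σ f G^{ρσ}) G_{μν} − ζ ∂_μ f ∂_ν f. Then at every point p where df(p) ≠ 0, the bilinear form g is nondegenerate of Lorentzian signature (n−1, 1), and the vector field G^{μν}∂_ν f is timelike with respect to g at such points. -/
/-!
Put `c = ⟨df, G⁻¹ df⟩`, which is positive because `G⁻¹` is positive definite. The quadratic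
form of `g` is `v ↦ c ⟨v, G v⟩ - ζ ⟨df, v⟩²`: it is positive definite on the hyperplane
`ker df`, and on the gradient `G⁻¹ df` it takes the value `(1 - ζ) c² < 0`. Since `g` is a
rank-one perturbation of `c G`, the matrix determinant lemma gives
`det g = cⁿ det G (1 - ζ) ≠ 0`.
-/

open Matrix

noncomputable def morseMetric {ι : Type*} [Fintype ι] [DecidableEq ι]
    (G : Matrix ι ι ℝ) (a : ι → ℝ) (ζ : ℝ) : Matrix ι ι ℝ :=
  (a ⬝ᵥ (G⁻¹ *ᵥ a)) • G - ζ • vecMulVec a a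

section

variable {ι : Type*} [Fintype ι] [DecidableEq ι] {G : Matrix ι ι ℝ} {a : ι → ℝ} {ζ : ℝ}

theorem dotProduct_morseMetric_mulVec (G : Matrix ι ι ℝ) (a : ι → ℝ) (ζ : ℝ) (v : ι → ℝ) :
    v ⬝ᵥ (morseMetric G a ζ *ᵥ v) =
      (a ⬝ᵥ (G⁻¹ *ᵥ a)) * (v ⬝ᵥ (G *ᵥ v)) - ζ * (a ⬝ᵥ v) ^ 2 := by
  simp only [morseMetric, sub_mulVec, smul_mulVec, vecMulVec_mulVec, dotProduct_sub,
    dotProduct_smul, dotProduct_comm v a, smul_eq_mul, op_smul_eq_mul]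
  ring

theorem dotProduct_morseMetric_mulVec_inv_mulVec (hG : IsUnit G.det) :
    (G⁻¹ *ᵥ a) ⬝ᵥ (morseMetric G a ζ *ᵥ (G⁻¹ *ᵥ a)) = (1 - ζ) * (a ⬝ᵥ (G⁻¹ *ᵥ a)) ^ 2 := by
  rw [dotProduct_morseMetric_mulVec, mulVec_mulVec, mul_nonsing_inv G hG, one_mulVec,
    dotProduct_comm _ a]
  ring

theorem det_morseMetric (hG : IsUnit G.det) (hc : a ⬝ᵥ (G⁻¹ *ᵥ a) ≠ 0) :
    (morseMetric G a ζ).det = (a ⬝ᵥ (G⁻¹ *ᵥ a)) ^ Fintype.card ι * G.det * (1 - ζ) := by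
  set c := a ⬝ᵥ (G⁻¹ *ᵥ a)
  have hcG : IsUnit (c • G).det := by
    rw [det_smul]
    exact (hc.isUnit.pow _).mul hG
  have hinv : (c • G)⁻¹ = c⁻¹ • G⁻¹ :=
    inv_eq_left_inv (by rw [smul_mul_smul_comm, inv_mul_cancel₀ hc, nonsing_inv_mul G hG, one_smul])
  have hrank_one :
      morseMetric G a ζ = c • G + replicateCol Unit (-ζ • a) * replicateRow Unit a := by
    rw [morseMetric, ← vecMulVec_eq, smul_vecMulVec, sub_eq_add_neg, neg_smul]
  rw [hrank_one, det_add_replicateCol_mul_replicateRow hcG, det_smul, Matrix.mul_assoc,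
    ← replicateCol_mulVec, det_unique (1 + _ : Matrix Unit Unit ℝ), Matrix.add_apply,
    one_apply_eq, replicateRow_mul_replicateCol_apply, hinv, smul_mulVec, mulVec_smul,
    dotProduct_smul, dotProduct_smul, smul_eq_mul, smul_eq_mul]
  field_simp
  ring

theorem Matrix.PosDef.dotProduct_morseMetric_mulVec_pos (hG : G.PosDef) (ha : a ≠ 0)
    {v : ι → ℝ} (hav : a ⬝ᵥ v = 0) (hv : v ≠ 0) : 0 < v ⬝ᵥ (morseMetric G a ζ *ᵥ v) := by
  rw [dotProduct_morseMetric_mulVec, hav, zero_pow two_ne_zero, mul_zero, sub_zero]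
  exact mul_pos (hG.inv.dotProduct_mulVec_pos ha) (hG.dotProduct_mulVec_pos hv)

end

theorem morse_metric_lorentzian_general
    (n : ℕ)
    (G : Matrix (Fin n) (Fin n) ℝ) (hG : G.PosDef)
    (df : Fin n → ℝ) (hdf : df ≠ 0)
    (ζ : ℝ) (hζ : 1 < ζ)
    (g : Matrix (Fin n) (Fin n) ℝ)
    (hg : g = (df ⬝ᵥ (G⁻¹ *ᵥ df)) • G - ζ • Matrix.vecMulVec df df) :
    g.det ≠ 0 ∧
    (∃ W : Submodule ℝ (Fin n → ℝ), Module.finrank ℝ W = n - 1 ∧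
      ∀ v ∈ W, v ≠ 0 → 0 < v ⬝ᵥ (g *ᵥ v)) ∧
    (∃ v : Fin n → ℝ, v ⬝ᵥ (g *ᵥ v) < 0) ∧
    (G⁻¹ *ᵥ df) ⬝ᵥ (g *ᵥ (G⁻¹ *ᵥ df)) < 0 := by
  obtain rfl : g = morseMetric G df ζ := hg
  have hGdet : IsUnit G.det := hG.det_pos.ne'.isUnit
  have hc : 0 < df ⬝ᵥ (G⁻¹ *ᵥ df) := hG.inv.dotProduct_mulVec_pos hdf
  have htimelike : (G⁻¹ *ᵥ df) ⬝ᵥ (morseMetric G df ζ *ᵥ (G⁻¹ *ᵥ df)) < 0 := by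
    rw [dotProduct_morseMetric_mulVec_inv_mulVec hGdet]
    exact mul_neg_of_neg_of_pos (by linarith) (by positivity)
  have hdual : dotProductEquiv ℝ (Fin n) df ≠ 0 := (LinearEquiv.map_ne_zero_iff _).mpr hdf
  refine ⟨?_, ⟨LinearMap.ker (dotProductEquiv ℝ (Fin n) df), ?_, ?_⟩, ⟨_, htimelike⟩, htimelike⟩
  · rw [det_morseMetric hGdet hc.ne']
    exact mul_ne_zero (mul_ne_zero (pow_ne_zero _ hc.ne') hGdet.ne_zero) (by linarith)
  · have := Module.Dual.finrank_ker_add_one_of_ne_zero hdual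
    rw [Module.finrank_fin_fun] at this
    omega
  · exact fun v hv hv0 => hG.dotProduct_morseMetric_mulVec_pos hdf hv hv0

/-- At a point where `df ≠ 0`, the Morse metric
`g_{μν} = (∂_ρ f ∂_σ f G^{ρσ}) G_{μν} − ζ ∂_μ f ∂_ν f` (built from a Riemannian
metric `G`, represented pointwise by a positive-definite matrix, the differential
`df` of a smooth function, and a constant `ζ > 1`) is nondegenerate of Lorentzian
signature `(n−1, 1)`: it is invertible, positive definite on an `(n−1)`-dimensional
subspace, and negative on some vector; moreover the vector `G^{μν}∂_ν f` is
timelike with respect to `g`. -/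
theorem morse_metric_lorentzian
    (n : ℕ) (hn : 2 ≤ n)
    (G : Matrix (Fin n) (Fin n) ℝ) (hG : G.PosDef)
    (df : Fin n → ℝ) (hdf : df ≠ 0)
    (ζ : ℝ) (hζ : 1 < ζ)
    (g : Matrix (Fin n) (Fin n) ℝ)
    (hg : g = (df ⬝ᵥ (G⁻¹ *ᵥ df)) • G - ζ • Matrix.vecMulVec df df) :
    g.det ≠ 0 ∧
    (∃ W : Submodule ℝ (Fin n → ℝ), Module.finrank ℝ W = n - 1 ∧
      ∀ v ∈ W, v ≠ 0 → 0 < v ⬝ᵥ (g *ᵥ v)) ∧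
    (∃ v : Fin n → ℝ, v ⬝ᵥ (g *ᵥ v) < 0) ∧
    (G⁻¹ *ᵥ df) ⬝ᵥ (g *ᵥ (G⁻¹ *ᵥ df)) < 0 :=
  morse_metric_lorentzian_general n G hG df hdf ζ hζ g hg
end

section
/- For the Morse metric g constructed from (G, f, ζ) with ζ > 1, at any point where df ≠ 0 one has g^{ρσ} ∂_ρ f ∂_σ f = 1/(1 − ζ); in particular this quantity is negative, so df is timelike with respect to g. -/
/-!
With `c = df ⬝ᵥ G⁻¹ df > 0` and `w = G⁻¹ df`, one has `g w = c (1 - ζ) df`, so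
`g⁻¹ df = w / (c (1 - ζ))` and `df ⬝ᵥ g⁻¹ df = 1 / (1 - ζ)`. That `g⁻¹` is a genuine inverse
follows from the matrix determinant lemma applied to the rank-one update `c G - ζ df dfᵀ`:
`det g = cⁿ det G (1 - ζ) ≠ 0`.
-/

open Matrix

namespace Matrix

variable {m K : Type*} [Fintype m] [DecidableEq m] [Field K]

theorem det_add_vecMulVec {A : Matrix m m K} (hA : IsUnit A.det) (u v : m → K) :
    (A + vecMulVec u v).det = A.det * (1 + v ⬝ᵥ (A⁻¹ *ᵥ u)) := by
  rw [vecMulVec_eq Unit, det_add_replicateCol_mul_replicateRow hA, det_unique (1 + _),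
    Matrix.mul_assoc, ← replicateCol_mulVec]
  simp

theorem inv_mulVec_eq_of_mulVec_eq {B : Matrix m m K} (hB : IsUnit B.det) {v w : m → K}
    (h : B *ᵥ w = v) : B⁻¹ *ᵥ v = w := by
  rw [← h, mulVec_mulVec, nonsing_inv_mul B hB, one_mulVec]

end Matrix

section Morse

variable {m K : Type*} [Fintype m] [DecidableEq m] [Field K]

noncomputable def morseMatrix (A : Matrix m m K) (d : m → K) (ζ : K) : Matrix m m K :=
  (d ⬝ᵥ (A⁻¹ *ᵥ d)) • A - ζ • vecMulVec d d

variable {A : Matrix m m K} {d : m → K} {ζ : K}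

theorem morseMatrix_mulVec_inv_mulVec (hA : IsUnit A.det) :
    morseMatrix A d ζ *ᵥ (A⁻¹ *ᵥ d) = ((d ⬝ᵥ (A⁻¹ *ᵥ d)) * (1 - ζ)) • d := by
  rw [morseMatrix, sub_mulVec, smul_mulVec, smul_mulVec, mulVec_mulVec, mul_nonsing_inv A hA,
    one_mulVec, vecMulVec_mulVec, op_smul_eq_smul, smul_smul, ← sub_smul]
  ring_nf

theorem det_morseMatrix (hA : IsUnit A.det) (hc : d ⬝ᵥ (A⁻¹ *ᵥ d) ≠ 0) :
    (morseMatrix A d ζ).det = (d ⬝ᵥ (A⁻¹ *ᵥ d)) ^ Fintype.card m * A.det * (1 - ζ) := by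
  have hcA : IsUnit ((d ⬝ᵥ (A⁻¹ *ᵥ d)) • A).det := by
    rw [det_smul]
    exact (hc.isUnit.pow _).mul hA
  have hcA_inv : ((d ⬝ᵥ (A⁻¹ *ᵥ d)) • A)⁻¹ = (d ⬝ᵥ (A⁻¹ *ᵥ d))⁻¹ • A⁻¹ :=
    inv_eq_left_inv <| by rw [smul_mul_smul_comm, inv_mul_cancel₀ hc, nonsing_inv_mul A hA, one_smul]
  rw [morseMatrix, sub_eq_add_neg, ← neg_smul, ← smul_vecMulVec, det_add_vecMulVec hcA, det_smul,
    hcA_inv, smul_mulVec, mulVec_smul, dotProduct_smul, dotProduct_smul, smul_eq_mul, smul_eq_mul]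
  field_simp
  ring

theorem isUnit_det_morseMatrix (hA : IsUnit A.det) (hc : d ⬝ᵥ (A⁻¹ *ᵥ d) ≠ 0) (hζ : ζ ≠ 1) :
    IsUnit (morseMatrix A d ζ).det := by
  rw [det_morseMatrix hA hc]
  exact ((hc.isUnit.pow _).mul hA).mul (sub_ne_zero.2 hζ.symm).isUnit

theorem dotProduct_morseMatrix_inv_mulVec (hA : IsUnit A.det) (hc : d ⬝ᵥ (A⁻¹ *ᵥ d) ≠ 0)
    (hζ : ζ ≠ 1) :
    d ⬝ᵥ ((morseMatrix A d ζ)⁻¹ *ᵥ d) = 1 / (1 - ζ) := by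
  have hζ' : 1 - ζ ≠ 0 := sub_ne_zero.2 hζ.symm
  have hsol : morseMatrix A d ζ *ᵥ ((d ⬝ᵥ (A⁻¹ *ᵥ d) * (1 - ζ))⁻¹ • (A⁻¹ *ᵥ d)) = d := by
    rw [mulVec_smul, morseMatrix_mulVec_inv_mulVec hA, smul_smul,
      inv_mul_cancel₀ (mul_ne_zero hc hζ'), one_smul]
  rw [inv_mulVec_eq_of_mulVec_eq (isUnit_det_morseMatrix hA hc hζ) hsol, dotProduct_smul,
    smul_eq_mul]
  field_simp

end Morse

/-- For the Morse metric `g` constructed from `(G, f, ζ)` with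
`ζ > 1`, at any point where `df ≠ 0` one has
`g^{ρσ} ∂_ρ f ∂_σ f = 1/(1 − ζ)`; in particular this quantity is negative, so
`df` is timelike with respect to `g`. (`g⁻¹` is the inverse matrix of `g`.) -/
theorem morse_metric_df_timelike
    (n : ℕ)
    (G : Matrix (Fin n) (Fin n) ℝ) (hG : G.PosDef)
    (df : Fin n → ℝ) (hdf : df ≠ 0)
    (ζ : ℝ) (hζ : 1 < ζ)
    (g : Matrix (Fin n) (Fin n) ℝ)
    (hg : g = (df ⬝ᵥ (G⁻¹ *ᵥ df)) • G - ζ • Matrix.vecMulVec df df) :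
    df ⬝ᵥ (g⁻¹ *ᵥ df) = 1 / (1 - ζ) ∧ df ⬝ᵥ (g⁻¹ *ᵥ df) < 0 := by
  have hc : 0 < df ⬝ᵥ (G⁻¹ *ᵥ df) := by simpa using hG.inv.dotProduct_mulVec_pos hdf
  have hG_det : IsUnit G.det := (isUnit_iff_isUnit_det G).1 hG.isUnit
  have hval : df ⬝ᵥ (g⁻¹ *ᵥ df) = 1 / (1 - ζ) :=
    hg ▸ dotProduct_morseMatrix_inv_mulVec hG_det hc.ne' hζ.ne'
  exact ⟨hval, hval ▸ one_div_neg.2 (sub_neg.2 hζ)⟩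
end
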